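/- arXiv:2012.04679 — 3 statements merged into one kernel-verified Lean document; each statement's English description precedes it below -/
import Mathlib

section
/- Let m ≥ 3 and let T_{utriv,m} := e_1⊗e_1⊗e_1 + ∑_{ρ=2}^m ( e_1⊗e_ρ⊗e_ρ + e_ρ⊗e_1⊗e_ρ ) ∈ ℂ^m ⊗ ℂ^m ⊗ ℂ^m. Then the border rank of T_{utriv,m} equals m and the tensor rank of T_{utriv,m} equals 2m − 1. -/
open scoped BigOperators

noncomputable section

/-- The ideal of all polynomials vanishing on a subset `S` of affine space `σ → ℂ`. -/
def vanishingIdeal' {σ : Type} (S : Set (σ → ℂ)) : Ideal (MvPolynomial σ ℂ) where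
  carrier := {p | ∀ x ∈ S, MvPolynomial.eval x p = 0}
  add_mem' := by
    intro p q hp hq x hx
    simp [hp x hx, hq x hx]
  zero_mem' := by
    intro x hx
    simp
  smul_mem' := by
    intro c p hp x hx
    simp [smul_eq_mul, hp x hx]

/-- The dimension of an affine algebraic set `S ⊆ ℂ^σ`: the Krull dimension of its
coordinate ring.  The empty set has dimension `⊥` (i.e. `-∞`). -/
def affineDim {σ : Type} (S : Set (σ → ℂ)) : WithBot (WithTop ℕ) :=
  ringKrullDim (MvPolynomial σ ℂ ⧸ vanishingIdeal' S)

/-- The dimension of an affine algebraic set, as a natural number. -/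
def affineDimNat {σ : Type} (S : Set (σ → ℂ)) : ℕ :=
  ENat.toNat ((affineDim S).unbotD 0)

variable {ι₁ ι₂ ι₃ : Type} [Fintype ι₁] [Fintype ι₂] [Fintype ι₃]

/-- The affine algebraic set `Σ̂^{AB}_T ⊆ ℂ^{ι₁} × ℂ^{ι₂}`. -/
def hatSigmaAB (T : ι₁ → ι₂ → ι₃ → ℂ) : Set (ι₁ ⊕ ι₂ → ℂ) :=
  {x | ∀ k : ι₃, ∑ i : ι₁, ∑ j : ι₂, T i j k * x (Sum.inl i) * x (Sum.inr j) = 0}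

/-- The geometric rank `GR(T) = (a+b) - dim Σ̂^{AB}_T`. -/
def geomRank (T : ι₁ → ι₂ → ι₃ → ℂ) : ℕ :=
  (Fintype.card ι₁ + Fintype.card ι₂) - affineDimNat (hatSigmaAB T)

/-- The flattening `T(α)`, a `ι₂ × ι₃` matrix, for `α ∈ ℂ^{ι₁}`. -/
def sliceA (T : ι₁ → ι₂ → ι₃ → ℂ) (α : ι₁ → ℂ) : Matrix ι₂ ι₃ ℂ :=
  Matrix.of fun j k => ∑ i : ι₁, T i j k * α i

/-- The flattening `T(β)`, a `ι₁ × ι₃` matrix, for `β ∈ ℂ^{ι₂}`. -/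
def sliceB (T : ι₁ → ι₂ → ι₃ → ℂ) (β : ι₂ → ℂ) : Matrix ι₁ ι₃ ℂ :=
  Matrix.of fun i k => ∑ j : ι₂, T i j k * β j

/-- The flattening `T(γ)`, a `ι₁ × ι₂` matrix, for `γ ∈ ℂ^{ι₃}`. -/
def sliceC (T : ι₁ → ι₂ → ι₃ → ℂ) (γ : ι₃ → ℂ) : Matrix ι₁ ι₂ ℂ :=
  Matrix.of fun i j => ∑ k : ι₃, T i j k * γ k

/-- A tensor is concise if its three flattening maps are injective. -/
def Concise (T : ι₁ → ι₂ → ι₃ → ℂ) : Prop :=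
  Function.Injective (sliceA T) ∧ Function.Injective (sliceB T) ∧
    Function.Injective (sliceC T)

/-- The tensor rank: least `r` such that `T` is a sum of `r` rank-one tensors. -/
def tensorRank (T : ι₁ → ι₂ → ι₃ → ℂ) : ℕ :=
  sInf {r : ℕ | ∃ (u : Fin r → ι₁ → ℂ) (v : Fin r → ι₂ → ℂ) (w : Fin r → ι₃ → ℂ),
    T = fun i j k => ∑ s : Fin r, u s i * v s j * w s k}

/-- The border rank: least `r` such that `T` is a limit of tensors of rank at most `r`. -/
def borderRank (T : ι₁ → ι₂ → ι₃ → ℂ) : ℕ :=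
  sInf {r : ℕ | T ∈ closure {T' : ι₁ → ι₂ → ι₃ → ℂ |
    ∃ (u : Fin r → ι₁ → ℂ) (v : Fin r → ι₂ → ℂ) (w : Fin r → ι₃ → ℂ),
      T' = fun i j k => ∑ s : Fin r, u s i * v s j * w s k}}

/-- The elementary (rank-one) basis tensor `e_i ⊗ e_j ⊗ e_k`. -/
def E {a b c : ℕ} (i : Fin a) (j : Fin b) (k : Fin c) : Fin a → Fin b → Fin c → ℂ :=
  fun i' j' k' => if i' = i ∧ j' = j ∧ k' = k then 1 else 0

/-- The Kronecker product of two 3-tensors. -/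
def kron {κ₁ κ₂ κ₃ : Type} [Fintype κ₁] [Fintype κ₂] [Fintype κ₃]
    (T : ι₁ → ι₂ → ι₃ → ℂ) (T' : κ₁ → κ₂ → κ₃ → ℂ) :
    ι₁ × κ₁ → ι₂ × κ₂ → ι₃ × κ₃ → ℂ :=
  fun i j k => T i.1 j.1 k.1 * T' i.2 j.2 k.2

/-- The tensor obtained from `T` by permuting the three factors by `σ`. -/
def permuteTensor {m : ℕ} (σ : Equiv.Perm (Fin 3)) (T : Fin m → Fin m → Fin m → ℂ) :
    Fin m → Fin m → Fin m → ℂ :=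
  fun i j k => T (![i, j, k] (σ 0)) (![i, j, k] (σ 1)) (![i, j, k] (σ 2))

/-- The action of a triple of linear maps on a tensor. -/
def actTensor {m : ℕ} (g₁ g₂ g₃ : Matrix (Fin m) (Fin m) ℂ)
    (T : Fin m → Fin m → Fin m → ℂ) : Fin m → Fin m → Fin m → ℂ :=
  fun i j k => ∑ i' : Fin m, ∑ j' : Fin m, ∑ k' : Fin m,
    g₁ i i' * g₂ j j' * g₃ k k' * T i' j' k'

/-- Two tensors are equivalent if one is obtained from the other by invertible linear
maps on each factor together with a permutation of the three factors. -/
def equivTensor {m : ℕ} (T T' : Fin m → Fin m → Fin m → ℂ) : Prop :=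
  ∃ (σ : Equiv.Perm (Fin 3)) (g₁ g₂ g₃ : Matrix (Fin m) (Fin m) ℂ),
    IsUnit g₁ ∧ IsUnit g₂ ∧ IsUnit g₃ ∧
    T' = actTensor g₁ g₂ g₃ (permuteTensor σ T)

/-- `T` is `1_*`-generic: some flattening space contains a matrix of full rank. -/
def OneStarGeneric {m : ℕ} (T : Fin m → Fin m → Fin m → ℂ) : Prop :=
  (∃ α, IsUnit (sliceA T α)) ∨ (∃ β, IsUnit (sliceB T β)) ∨ (∃ γ, IsUnit (sliceC T γ))

end

/-!
Contracting the first factor with `α` gives the matrix `T(α) = α₀ • 1 + e₀ ⊗ (0, α₁, …, α_{m-1})`,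
upper triangular with determinant `α₀ ^ m`.

*Border rank.* `T(e₀) = 1`, while `X ↦ det X(e₀)` is continuous and vanishes on every tensor of
rank `< m`. Conversely `T + ε • ∑_{k ≠ 0} e_k ⊗ e_k ⊗ e_k` has rank `m` for `ε ≠ 0`.

*Rank (substitution method).* Given a decomposition `T = ∑_{s < r} u_s ⊗ v_s ⊗ w_s`, the map
`α ↦ (⟪u_s, α⟫)_s` is injective on the hyperplane `α₀ = 0`, since `T(α)` is. Hence one can pick `α`
with `α₀ = 1` orthogonal to `m - 1` of the `u_s`. Then `T(α)` is a sum of at most `r - (m - 1)`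
rank-one matrices, but it is invertible, so `r ≥ 2m - 1`. The decomposition
`∑_k e₀ ⊗ e_k ⊗ e_k + ∑_{k ≠ 0} e_k ⊗ e₀ ⊗ e_k` shows equality.
-/

open Finset Matrix Module

theorem exists_card_support_add_finrank_le {K V ι : Type*} [Field K] [DecidableEq K]
    [AddCommGroup V] [Module K V] [FiniteDimensional K V] [Fintype ι] [DecidableEq ι]
    {Φ : V →ₗ[K] (ι → K)} (hΦ : Function.Injective Φ) (x : ι → K) :
    ∃ v, #{s | x s + Φ v s ≠ 0} + finrank K V ≤ Fintype.card ι := by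
  -- A linearly independent subfamily `a` of the coordinate functionals `(Φ ·) s` with the same
  -- span has exactly `finrank V` members, so `x + Φ v` can be made to vanish on all of it.
  let f : ι → Dual K V := fun s => LinearMap.proj s ∘ₗ Φ
  obtain ⟨κ, a, ha, hspan, hli⟩ := exists_linearIndependent' K f
  have : Fintype κ := @Fintype.ofFinite κ (Finite.of_injective a ha)
  let ψ : V →ₗ[K] (κ → K) := LinearMap.pi fun k => f (a k)
  have hψ : Function.Injective ψ := by
    refine (injective_iff_map_eq_zero ψ).2 fun v hv => hΦ ?_
    have hker : Submodule.span K (Set.range f) ≤ LinearMap.ker (Dual.eval K V v) := by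
      rw [← hspan, Submodule.span_le]
      rintro _ ⟨k, rfl⟩
      exact congrFun hv k
    ext s
    simpa [f] using hker (Submodule.subset_span ⟨s, rfl⟩)
  have hcard : finrank K V = Fintype.card κ := by
    refine le_antisymm ?_ ?_
    · simpa using LinearMap.finrank_le_finrank_of_injective hψ
    · simpa [Subspace.dual_finrank_eq] using hli.fintype_card_le_finrank
  obtain ⟨v, hv⟩ := (LinearMap.injective_iff_surjective_of_finrank_eq_finrank
    (by simpa using hcard)).1 hψ fun k => -x (a k)
  refine ⟨v, ?_⟩
  have hsupp : ({s | x s + Φ v s ≠ 0} : Finset ι) ⊆ (univ.image a)ᶜ := by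
    intro s hs
    simp only [mem_filter, mem_univ, true_and] at hs
    simp only [mem_compl, mem_image, mem_univ, true_and, not_exists]
    rintro k rfl
    exact hs (by simpa [ψ, f, add_eq_zero_iff_eq_neg'] using congrFun hv k)
  calc #{s | x s + Φ v s ≠ 0} + finrank K V
      ≤ #(univ.image a)ᶜ + #(univ.image a) := by
        rw [hcard, card_image_of_injective _ ha, card_univ]
        exact Nat.add_le_add_right (card_le_card hsupp) _
    _ = Fintype.card ι := card_compl_add_card _

theorem mem_closure_of_forall_add_smul_mem {𝕜 E : Type*} [NontriviallyNormedField 𝕜]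
    [AddCommGroup E] [TopologicalSpace E] [IsTopologicalAddGroup E] [Module 𝕜 E]
    [ContinuousSMul 𝕜 E] {S : Set E} {T D : E} (h : ∀ ε : 𝕜, ε ≠ 0 → T + ε • D ∈ S) :
    T ∈ closure S := by
  have hcont : Continuous fun ε : 𝕜 => T + ε • D := by fun_prop
  have hlim : Filter.Tendsto (fun ε : 𝕜 => T + ε • D) (nhdsWithin 0 {0}ᶜ) (nhds T) := by
    simpa using (hcont.tendsto 0).mono_left nhdsWithin_le_nhds
  exact mem_closure_of_tendsto hlim (eventually_nhdsWithin_of_forall h)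

theorem Fintype.sum_subtype_ne_ite_eq {α M : Type*} [Fintype α] [DecidableEq α] [AddCommMonoid M]
    {a l : α} (f : {x // x ≠ a} → M) :
    (∑ x : {x // x ≠ a}, if l = x then f x else 0) = if h : l = a then 0 else f ⟨l, h⟩ := by
  split_ifs with h
  · exact Finset.sum_eq_zero fun (x : {x // x ≠ a}) _ => if_neg fun hx : l = x => x.2 (hx ▸ h)
  · rw [Fintype.sum_eq_single ⟨l, h⟩ fun x hx => if_neg fun hx' => hx (Subtype.ext hx'.symm)]
    exact if_pos rfl

theorem Fin.sum_subtype_ne_zero {M : Type*} [AddCommMonoid M] {m : ℕ} [NeZero m]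
    (f : Fin m → M) :
    ∑ k : {k : Fin m // k ≠ 0}, f k =
      ∑ ρ : Fin (m - 1), f ⟨ρ + 1, Nat.add_lt_of_lt_sub ρ.isLt⟩ := by
  let e : Fin (m - 1) ≃ {k : Fin m // k ≠ 0} :=
    { toFun := fun ρ => ⟨⟨ρ + 1, Nat.add_lt_of_lt_sub ρ.isLt⟩, by simp [Fin.ext_iff]⟩
      invFun := fun k => ⟨k.1 - 1, by have := Fin.val_ne_zero_iff.2 k.2; omega⟩
      left_inv := fun ρ => by simp
      right_inv := fun k => Subtype.ext <| Fin.ext <|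
        Nat.sub_add_cancel (Nat.one_le_iff_ne_zero.2 (Fin.val_ne_zero_iff.2 k.2)) }
  exact (Fintype.sum_equiv e _ _ fun _ => rfl).symm

section RankDecompositions

variable {ι₁ ι₂ ι₃ : Type}

def tensorsOfRankLE (r : ℕ) : Set (ι₁ → ι₂ → ι₃ → ℂ) :=
  {T | ∃ (u : Fin r → ι₁ → ℂ) (v : Fin r → ι₂ → ℂ) (w : Fin r → ι₃ → ℂ),
    T = fun i j k => ∑ s : Fin r, u s i * v s j * w s k}

theorem mem_tensorsOfRankLE_of_eq_sum {κ : Type*} [Fintype κ] {r : ℕ}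
    (hκ : Fintype.card κ = r) {T : ι₁ → ι₂ → ι₃ → ℂ} (u : κ → ι₁ → ℂ) (v : κ → ι₂ → ℂ)
    (w : κ → ι₃ → ℂ) (hT : T = fun i j k => ∑ s, u s i * v s j * w s k) :
    T ∈ tensorsOfRankLE r := by
  let e := (Fintype.equivFin κ).trans (finCongr hκ)
  refine ⟨u ∘ e.symm, v ∘ e.symm, w ∘ e.symm, hT.trans ?_⟩
  funext i j k
  exact (e.symm.sum_comp fun s => u s i * v s j * w s k).symm

variable [Fintype ι₁] {r : ℕ} {u : Fin r → ι₁ → ℂ} {v : Fin r → ι₂ → ℂ} {w : Fin r → ι₃ → ℂ}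

theorem sliceA_sum_apply (α : ι₁ → ℂ) (j : ι₂) (k : ι₃) :
    sliceA (fun i j k => ∑ s, u s i * v s j * w s k) α j k =
      ∑ s, (u s ⬝ᵥ α) * v s j * w s k := by
  simp only [sliceA, of_apply, dotProduct, sum_mul]
  rw [sum_comm]
  exact sum_congr rfl fun s _ => sum_congr rfl fun i _ => by ring

theorem rank_sliceA_le [Fintype ι₃] (α : ι₁ → ℂ) :
    (sliceA (fun i j k => ∑ s, u s i * v s j * w s k) α).rank ≤ #{s | u s ⬝ᵥ α ≠ 0} := by
  set F : Finset (Fin r) := {s | u s ⬝ᵥ α ≠ 0}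
  have hfactor : sliceA (fun i j k => ∑ s, u s i * v s j * w s k) α =
      (of fun j (s : F) => (u s ⬝ᵥ α) * v s j) * of fun (s : F) k => w s k := by
    ext j k
    rw [sliceA_sum_apply, mul_apply, ← sum_filter_of_ne fun s _ h =>
      left_ne_zero_of_mul (left_ne_zero_of_mul h)]
    exact (sum_coe_sort F fun s => u s ⬝ᵥ α * v s j * w s k).symm
  calc _ ≤ (of fun j (s : F) => (u s ⬝ᵥ α) * v s j).rank := hfactor ▸ rank_mul_le_left _ _
    _ ≤ Fintype.card F := rank_le_card_width _
    _ = #F := Fintype.card_coe F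

theorem exists_rank_sliceA_add_finrank_le [Fintype ι₃] (W : Submodule ℂ (ι₁ → ℂ))
    (hW : Set.InjOn (sliceA fun i j k => ∑ s, u s i * v s j * w s k) W) (α₀ : ι₁ → ℂ) :
    ∃ α ∈ W, (sliceA (fun i j k => ∑ s, u s i * v s j * w s k) (α₀ + α)).rank +
      finrank ℂ W ≤ r := by
  let Φ : W →ₗ[ℂ] (Fin r → ℂ) := (of u).mulVecLin ∘ₗ W.subtype
  have hΦ : Function.Injective Φ := by
    refine (injective_iff_map_eq_zero Φ).2 fun α hα => Subtype.ext (hW α.2 W.zero_mem ?_)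
    ext j k
    have hu : ∀ s, u s ⬝ᵥ α = 0 := congrFun hα
    simp [sliceA_sum_apply, hu]
  obtain ⟨α, hα⟩ := exists_card_support_add_finrank_le hΦ fun s => u s ⬝ᵥ α₀
  have hΦα : ∀ s, u s ⬝ᵥ α₀ + Φ α s = u s ⬝ᵥ (α₀ + α) := fun s => (dotProduct_add _ _ _).symm
  simp only [hΦα, Fintype.card_fin] at hα
  exact ⟨α, α.2, le_trans (Nat.add_le_add_right (rank_sliceA_le _) _) hα⟩

theorem det_sliceA_eq_zero_of_mem_closure {n : Type} [Fintype n] [DecidableEq n]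
    {T : ι₁ → n → n → ℂ} (hr : r < Fintype.card n) (hT : T ∈ closure (tensorsOfRankLE r))
    (α : ι₁ → ℂ) : (sliceA T α).det = 0 := by
  refine closure_minimal (s := tensorsOfRankLE r) ?_
    (isClosed_eq (f := fun X : ι₁ → n → n → ℂ => (sliceA X α).det) ?_ continuous_const) hT
  · rintro _ ⟨u, v, w, rfl⟩
    by_contra hdet
    have hrank := rank_of_isUnit _ ((isUnit_iff_isUnit_det _).2 (Ne.isUnit hdet))
    have := (rank_sliceA_le (u := u) (v := v) (w := w) α).trans (card_le_univ _)
    simp only [Fintype.card_fin] at this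
    omega
  · unfold sliceA
    fun_prop

end RankDecompositions

-- Index `0` stands for `e_1`; the second summand is `e_k ⊗ e_1 ⊗ e_k` for `k ≠ 0`.
def utrivTensor (m : ℕ) [NeZero m] : Fin m → Fin m → Fin m → ℂ :=
  fun i j k => (if i = 0 ∧ j = k then 1 else 0) + (if j = 0 ∧ i = k ∧ k ≠ 0 then 1 else 0)

section UtrivTensor

variable {m : ℕ} [NeZero m]

theorem sliceA_utrivTensor_apply (α : Fin m → ℂ) (j k : Fin m) :
    sliceA (utrivTensor m) α j k =
      α 0 * (if j = k then 1 else 0) + if j = 0 ∧ k ≠ 0 then α k else 0 := by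
  simp [sliceA, utrivTensor, add_mul, sum_add_distrib, ite_and]

theorem det_sliceA_utrivTensor (α : Fin m → ℂ) : (sliceA (utrivTensor m) α).det = α 0 ^ m := by
  have htri : (sliceA (utrivTensor m) α).IsUpperTriangular := by
    intro j k (hkj : k < j)
    have hj : j ≠ 0 := ne_of_gt (lt_of_le_of_lt (Fin.zero_le k) hkj)
    simp [sliceA_utrivTensor_apply, hj, hkj.ne']
  rw [det_of_isUpperTriangular htri]
  simp [sliceA_utrivTensor_apply]

theorem sliceA_utrivTensor_injective : Function.Injective (sliceA (utrivTensor m)) := by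
  intro α β h
  funext k
  have := congrFun (congrFun h 0) k
  rcases eq_or_ne k 0 with rfl | hk
  · simpa [sliceA_utrivTensor_apply] using this
  · simpa [sliceA_utrivTensor_apply, hk, hk.symm] using this

theorem utrivTensor_mem_tensorsOfRankLE : utrivTensor m ∈ tensorsOfRankLE (2 * m - 1) := by
  have hcard : Fintype.card (Fin m ⊕ {k : Fin m // k ≠ 0}) = 2 * m - 1 := by
    simp only [Fintype.card_sum, Fintype.card_fin, Fintype.card_subtype_compl,
      Fintype.card_unique]
    omega
  refine mem_tensorsOfRankLE_of_eq_sum hcard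
    (Sum.elim (fun _ => Pi.single 0 1) fun k => Pi.single k 1)
    (Sum.elim (fun k => Pi.single k 1) fun _ => Pi.single 0 1)
    (Sum.elim (fun k => Pi.single k 1) fun k => Pi.single k 1) ?_
  funext i j l
  simp only [utrivTensor, Fintype.sum_sum_type, Sum.elim_inl, Sum.elim_inr, Pi.single_apply,
    mul_ite, mul_one, mul_zero, sum_ite_eq, mem_univ, ↓reduceIte, Fintype.sum_subtype_ne_ite_eq]
  split_ifs <;> simp_all

theorem utrivTensor_add_smul_mem {ε : ℂ} (hε : ε ≠ 0) :
    utrivTensor m + ε • (fun i j k => if i = k ∧ j = k ∧ k ≠ 0 then 1 else 0) ∈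
      tensorsOfRankLE m := by
  have hcard : Fintype.card (Option {k : Fin m // k ≠ 0}) = m := by
    simp [Fintype.card_subtype_compl, Nat.sub_add_cancel NeZero.one_le]
  -- Expanding `(e₀ + ε e_k) ⊗ (e₀ + ε e_k) ⊗ ε⁻¹ e_k` leaves `ε⁻¹ e₀ ⊗ e₀ ⊗ e_k`, which the
  -- `none` term cancels.
  refine mem_tensorsOfRankLE_of_eq_sum hcard
    (fun o => o.elim (Pi.single 0 1) fun k => Pi.single 0 1 + ε • Pi.single (k : Fin m) 1)
    (fun o => o.elim (Pi.single 0 1) fun k => Pi.single 0 1 + ε • Pi.single (k : Fin m) 1)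
    (fun o => o.elim (fun l => if l = 0 then 1 else -ε⁻¹) fun k => ε⁻¹ • Pi.single (k : Fin m) 1)
    ?_
  funext i j l
  simp only [Fintype.sum_option, Option.elim, Pi.add_apply, Pi.smul_apply, utrivTensor, smul_eq_mul, mul_ite, mul_one, mul_zero,
    Pi.single_apply, mul_neg, ite_mul, one_mul, zero_mul, Fintype.sum_subtype_ne_ite_eq]
  rcases eq_or_ne l 0 with rfl | hl
  · simp only [↓reduceIte, add_zero, ↓reduceDIte]
    split_ifs <;> simp_all
  · by_cases hi : i = l <;> by_cases hj : j = l <;> simp_all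

theorem utrivTensor_mem_closure : utrivTensor m ∈ closure (tensorsOfRankLE m) :=
  mem_closure_of_forall_add_smul_mem fun _ hε => utrivTensor_add_smul_mem hε

theorem le_of_utrivTensor_mem_closure {r : ℕ} (h : utrivTensor m ∈ closure (tensorsOfRankLE r)) :
    m ≤ r := by
  by_contra! hr
  have := det_sliceA_eq_zero_of_mem_closure (by simpa using hr) h (Pi.single 0 1)
  simp [det_sliceA_utrivTensor] at this

theorem two_mul_sub_one_le_of_utrivTensor_mem {r : ℕ} (h : utrivTensor m ∈ tensorsOfRankLE r) :
    2 * m - 1 ≤ r := by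
  obtain ⟨u, v, w, hT⟩ := h
  let W := LinearMap.ker (LinearMap.proj 0 : (Fin m → ℂ) →ₗ[ℂ] ℂ)
  have hW : finrank ℂ W + 1 = m := by
    refine (Module.Dual.finrank_ker_add_one_of_ne_zero fun h => ?_).trans (by simp)
    simpa using LinearMap.congr_fun h (Pi.single 0 1)
  have hinj := (sliceA_utrivTensor_injective (m := m)).injOn (s := W)
  have hdet := det_sliceA_utrivTensor (m := m)
  rw [hT] at hinj hdet
  obtain ⟨α, hα, hle⟩ := exists_rank_sliceA_add_finrank_le W hinj (Pi.single 0 1)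
  have hunit : IsUnit (sliceA (fun i j k => ∑ s, u s i * v s j * w s k) (Pi.single 0 1 + α)) := by
    rw [isUnit_iff_isUnit_det, hdet]
    simp [show α 0 = 0 from hα]
  rw [rank_of_isUnit _ hunit, Fintype.card_fin] at hle
  omega

theorem borderRank_utrivTensor : borderRank (utrivTensor m) = m :=
  le_antisymm (Nat.sInf_le utrivTensor_mem_closure)
    (le_csInf ⟨m, utrivTensor_mem_closure⟩ fun _ => le_of_utrivTensor_mem_closure)

theorem tensorRank_utrivTensor : tensorRank (utrivTensor m) = 2 * m - 1 :=
  le_antisymm (Nat.sInf_le utrivTensor_mem_tensorsOfRankLE)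
    (le_csInf ⟨_, utrivTensor_mem_tensorsOfRankLE⟩ fun _ => two_mul_sub_one_le_of_utrivTensor_mem)

theorem E_add_sum_E_eq_utrivTensor :
    E (0 : Fin m) (0 : Fin m) (0 : Fin m) + ∑ ρ : Fin (m - 1),
      (E (0 : Fin m) ⟨ρ + 1, Nat.add_lt_of_lt_sub ρ.isLt⟩ ⟨ρ + 1, Nat.add_lt_of_lt_sub ρ.isLt⟩ +
        E ⟨ρ + 1, Nat.add_lt_of_lt_sub ρ.isLt⟩ (0 : Fin m) ⟨ρ + 1, Nat.add_lt_of_lt_sub ρ.isLt⟩) =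
      utrivTensor m := by
  rw [← Fin.sum_subtype_ne_zero fun k => E 0 k k + E k 0 k]
  funext i j l
  simp only [E, utrivTensor, Pi.add_apply, Finset.sum_apply]
  rcases eq_or_ne l 0 with rfl | hl
  · rw [Finset.sum_eq_zero fun c _ => by simp [Ne.symm c.2]]
    simp
  · have hc : ∀ c : {c : Fin m // c ≠ 0}, c ≠ ⟨l, hl⟩ → l ≠ c :=
      fun c hc h => hc (Subtype.ext h.symm)
    rw [Fintype.sum_eq_single ⟨l, hl⟩ fun c h => by simp [hc c h]]
    simp [hl, and_comm]

end UtrivTensor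

/-- For `m ≥ 3`, the tensor
`T_{utriv,m} = e_1⊗e_1⊗e_1 + ∑_{ρ=2}^m (e_1⊗e_ρ⊗e_ρ + e_ρ⊗e_1⊗e_ρ)` has border rank `m`
and tensor rank `2m - 1`. -/
theorem stmt_4 (m : ℕ) (hm : 3 ≤ m) (T : Fin m → Fin m → Fin m → ℂ)
    (hT : T =
      E ⟨0, by omega⟩ ⟨0, by omega⟩ ⟨0, by omega⟩ +
      ∑ ρ : Fin (m - 1),
        (E ⟨0, by omega⟩ ⟨(ρ : ℕ) + 1, by have := ρ.isLt; omega⟩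
            ⟨(ρ : ℕ) + 1, by have := ρ.isLt; omega⟩ +
         E ⟨(ρ : ℕ) + 1, by have := ρ.isLt; omega⟩ ⟨0, by omega⟩
            ⟨(ρ : ℕ) + 1, by have := ρ.isLt; omega⟩)) :
    borderRank T = m ∧ tensorRank T = 2 * m - 1 := by
  have : NeZero m := ⟨by omega⟩
  obtain rfl : T = utrivTensor m := hT.trans E_add_sum_E_eq_utrivTensor
  exact ⟨borderRank_utrivTensor, tensorRank_utrivTensor⟩
end

section
/- Let T ∈ ℂ^m ⊗ ℂ^m ⊗ ℂ^m be concise. If GR(T) < m, then the tensor rank satisfies R(T) > m. -/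
open scoped BigOperators

/-! If `R(T) ≤ m`, conciseness forces a decomposition `T = ∑_{s < m} u_s ⊗ v_s ⊗ w_s` in which
each of the families `u`, `v`, `w` is a basis. As the `w_s` are independent, `(α, β)` lies in
`Σ̂^{AB}_T` iff `⟨u_s, α⟩ ⟨v_s, β⟩ = 0` for every `s`, so `Σ̂^{AB}_T` is a finite union of linear
subspaces, each cut out by `m` independent linear forms. Each has dimension `m`, and the
dimension of a finite union is the maximum of the dimensions, hence `GR(T) ≥ 2m - m = m`. -/

open Matrix

/- A prime above a finite intersection lies above one of the ideals, and so does every prime of a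
chain starting there: chains in the union of the zero loci live in a single one. -/
open Order in
lemma ringKrullDim_quotient_iInf_le {R ι : Type*} [CommRing R] [Finite ι] (I : ι → Ideal R) :
    ringKrullDim (R ⧸ ⨅ i, I i) ≤ ⨆ i, ringKrullDim (R ⧸ I i) := by
  have := Fintype.ofFinite ι
  rw [ringKrullDim_quotient, krullDim_eq_iSup_coheight]
  refine iSup_le fun p => ?_
  obtain ⟨i, -, hi⟩ : ∃ i ∈ Finset.univ, I i ≤ p.1.asIdeal :=
    p.1.isPrime.inf_le'.mp (by rw [Finset.inf_univ_eq_iInf]; exact p.2)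
  have hIci : Set.Ici p.1 ⊆ PrimeSpectrum.zeroLocus (I i) := fun q hq =>
    (hi.trans hq : I i ≤ q.asIdeal)
  calc (coheight p : WithBot ℕ∞) ≤ coheight p.1 := by
        exact_mod_cast coheight_le_coheight_apply_of_strictMono Subtype.val (fun _ _ h => h) p
    _ = krullDim (Set.Ici p.1) := by rw [coheight_eq_krullDim_Ici]
    _ ≤ krullDim (PrimeSpectrum.zeroLocus (R := R) (I i)) :=
        krullDim_le_of_strictMono (Set.inclusion hIci) fun _ _ h => h
    _ = ringKrullDim (R ⧸ I i) := (ringKrullDim_quotient _).symm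
    _ ≤ ⨆ i, ringKrullDim (R ⧸ I i) := le_iSup (fun i => ringKrullDim (R ⧸ I i)) i

lemma ringKrullDim_le_of_adjoin_range_eq_top {K A ι : Type*} [Field K] [CommRing A] [Algebra K A]
    [Finite ι] (f : ι → A) (hf : Algebra.adjoin K (Set.range f) = ⊤) :
    ringKrullDim A ≤ Nat.card ι := by
  have hsurj : Function.Surjective (MvPolynomial.aeval (R := K) f) := by
    rw [← AlgHom.range_eq_top, ← Algebra.adjoin_range_eq_range_aeval, hf]
  calc ringKrullDim A ≤ ringKrullDim (MvPolynomial ι K) :=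
        ringKrullDim_le_of_surjective _ hsurj
    _ = Nat.card ι := by
        simp [MvPolynomial.ringKrullDim_of_isNoetherianRing, ringKrullDim_eq_zero_of_field]

open MvPolynomial in
lemma ringKrullDim_quotient_le_of_linearForms_mem {K τ : Type*} [Field K] [Fintype τ]
    [DecidableEq τ] {L : Matrix τ τ K} (hL : IsUnit L) {J : Set τ} {I : Ideal (MvPolynomial τ K)}
    (hI : ∀ c ∈ J, (L.map C *ᵥ X) c ∈ I) :
    ringKrullDim (MvPolynomial τ K ⧸ I) ≤ Nat.card ↥Jᶜ := by
  -- Inverting `L` writes each variable through the forms; those indexed by `J` vanish mod `I`.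
  obtain ⟨M, hML⟩ := hL.exists_left_inv
  have hX : (X : τ → MvPolynomial τ K) = M.map C *ᵥ (L.map C *ᵥ X) := by
    rw [mulVec_mulVec, ← Matrix.map_mul, hML, Matrix.map_one _ (map_zero C) (map_one C),
      one_mulVec]
  refine ringKrullDim_le_of_adjoin_range_eq_top (K := K)
    (fun c : ↥Jᶜ => Ideal.Quotient.mk I ((L.map C *ᵥ X) c)) ?_
  set B := Algebra.adjoin K (Set.range fun c : ↥Jᶜ => Ideal.Quotient.mk I ((L.map C *ᵥ X) c))
  have hXmem : ∀ i, Ideal.Quotient.mk I (X i) ∈ B := by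
    intro i
    rw [hX, mulVec, dotProduct, map_sum]
    refine Subalgebra.sum_mem _ fun c _ => ?_
    rw [map_mul, Matrix.map_apply]
    refine Subalgebra.mul_mem _ (Subalgebra.algebraMap_mem B (M i c)) ?_
    by_cases hc : c ∈ J
    · rw [Ideal.Quotient.eq_zero_iff_mem.mpr (hI c hc)]
      exact zero_mem B
    · exact Algebra.subset_adjoin ⟨⟨c, hc⟩, rfl⟩
  rw [eq_top_iff]
  rintro a -
  obtain ⟨p, rfl⟩ := Ideal.Quotient.mk_surjective a
  induction p using MvPolynomial.induction_on with
  | C a => exact Subalgebra.algebraMap_mem B a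
  | add p q hp hq => rw [map_add]; exact add_mem hp hq
  | mul_X p i hp => rw [map_mul]; exact mul_mem hp (hXmem i)

lemma mem_vanishingIdeal' {σ : Type} {S : Set (σ → ℂ)} {p : MvPolynomial σ ℂ} :
    p ∈ vanishingIdeal' S ↔ ∀ x ∈ S, MvPolynomial.eval x p = 0 := Iff.rfl

lemma vanishingIdeal'_anti {σ : Type} {S S' : Set (σ → ℂ)} (h : S ⊆ S') :
    vanishingIdeal' S' ≤ vanishingIdeal' S := fun _ hp x hx => hp x (h hx)

lemma vanishingIdeal'_iUnion {σ ι : Type} (S : ι → Set (σ → ℂ)) :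
    vanishingIdeal' (⋃ i, S i) = ⨅ i, vanishingIdeal' (S i) := by
  ext p
  simp only [mem_vanishingIdeal', Submodule.mem_iInf, Set.mem_iUnion, forall_exists_index]
  exact forall_comm

lemma affineDim_mono {σ : Type} {S S' : Set (σ → ℂ)} (h : S ⊆ S') :
    affineDim S ≤ affineDim S' :=
  ringKrullDim_le_of_surjective _ (Ideal.Quotient.factor_surjective (vanishingIdeal'_anti h))

lemma affineDim_iUnion_le {σ ι : Type} [Finite ι] (S : ι → Set (σ → ℂ)) :
    affineDim (⋃ i, S i) ≤ ⨆ i, affineDim (S i) := by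
  rw [affineDim, vanishingIdeal'_iUnion]
  exact ringKrullDim_quotient_iInf_le _

open MvPolynomial in
lemma eval_mulVec_X {τ : Type} [Fintype τ] (L : Matrix τ τ ℂ) (x : τ → ℂ) (c : τ) :
    eval x ((L.map C *ᵥ X) c) = (L *ᵥ x) c := by
  simp [mulVec, dotProduct]

lemma affineDim_setOf_mulVec_eq_zero_le {τ : Type} [Fintype τ] [DecidableEq τ]
    {L : Matrix τ τ ℂ} (hL : IsUnit L) (J : Set τ) :
    affineDim {x | ∀ c ∈ J, (L *ᵥ x) c = 0} ≤ Nat.card ↥Jᶜ :=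
  ringKrullDim_quotient_le_of_linearForms_mem hL fun c hc x hx => by
    rw [eval_mulVec_X]; exact hx c hc

lemma affineDimNat_le_of_affineDim_le {σ : Type} {S : Set (σ → ℂ)} {n : ℕ}
    (h : affineDim S ≤ n) : affineDimNat S ≤ n := by
  unfold affineDimNat
  generalize affineDim S = d at h
  induction d using WithBot.recBotCoe with
  | bot => exact Nat.zero_le n
  | coe d => exact ENat.toNat_le_of_le_natCast (by exact_mod_cast h)

lemma card_le_card_of_injective_mulVec {K ρ ι : Type*} [Field K] [Fintype ρ] [Fintype ι]
    {M : Matrix ρ ι K} (hM : Function.Injective M.mulVec) :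
    Fintype.card ι ≤ Fintype.card ρ := by
  simpa using LinearMap.finrank_le_finrank_of_injective (f := M.mulVecLin) hM

section Decomposition

variable {ι₁ ι₂ ι₃ ρ : Type} [Fintype ρ]
  {T : ι₁ → ι₂ → ι₃ → ℂ} {u : ρ → ι₁ → ℂ} {v : ρ → ι₂ → ℂ} {w : ρ → ι₃ → ℂ}

lemma sliceA_of_eq_sum [Fintype ι₁]
    (hT : T = fun i j k => ∑ s, u s i * v s j * w s k) (α : ι₁ → ℂ) :
    sliceA T α = Matrix.of fun j k => ∑ s, (Matrix.of u *ᵥ α) s * (v s j * w s k) := by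
  subst hT
  ext j k
  simp only [sliceA, of_apply, mulVec, dotProduct, Finset.sum_mul]
  rw [Finset.sum_comm]
  refine Finset.sum_congr rfl fun s _ => Finset.sum_congr rfl fun i _ => by ring

lemma sliceB_of_eq_sum [Fintype ι₂]
    (hT : T = fun i j k => ∑ s, u s i * v s j * w s k) (β : ι₂ → ℂ) :
    sliceB T β = Matrix.of fun i k => ∑ s, (Matrix.of v *ᵥ β) s * (u s i * w s k) := by
  subst hT
  ext i k
  simp only [sliceB, of_apply, mulVec, dotProduct, Finset.sum_mul]
  rw [Finset.sum_comm]
  refine Finset.sum_congr rfl fun s _ => Finset.sum_congr rfl fun j _ => by ring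

lemma sliceC_of_eq_sum [Fintype ι₃]
    (hT : T = fun i j k => ∑ s, u s i * v s j * w s k) (γ : ι₃ → ℂ) :
    sliceC T γ = Matrix.of fun i j => ∑ s, (Matrix.of w *ᵥ γ) s * (u s i * v s j) := by
  subst hT
  ext i j
  simp only [sliceC, of_apply, mulVec, dotProduct, Finset.sum_mul]
  rw [Finset.sum_comm]
  refine Finset.sum_congr rfl fun s _ => Finset.sum_congr rfl fun k _ => by ring

lemma Concise.injective_mulVec_of_eq_sum [Fintype ι₁] [Fintype ι₂] [Fintype ι₃] (hc : Concise T)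
    (hT : T = fun i j k => ∑ s, u s i * v s j * w s k) :
    Function.Injective (Matrix.of u).mulVec ∧ Function.Injective (Matrix.of v).mulVec ∧
      Function.Injective (Matrix.of w).mulVec := by
  obtain ⟨hA, hB, hC⟩ := hc
  refine ⟨.of_comp (f := fun y => Matrix.of fun j k => ∑ s, y s * (v s j * w s k)) ?_,
    .of_comp (f := fun y => Matrix.of fun i k => ∑ s, y s * (u s i * w s k)) ?_,
    .of_comp (f := fun y => Matrix.of fun i j => ∑ s, y s * (u s i * v s j)) ?_⟩
  · simpa only [Function.comp_def, ← sliceA_of_eq_sum hT] using hA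
  · simpa only [Function.comp_def, ← sliceB_of_eq_sum hT] using hB
  · simpa only [Function.comp_def, ← sliceC_of_eq_sum hT] using hC

lemma sum_mul_mul_of_eq_sum [Fintype ι₁] [Fintype ι₂]
    (hT : T = fun i j k => ∑ s, u s i * v s j * w s k)
    (α : ι₁ → ℂ) (β : ι₂ → ℂ) (k : ι₃) :
    ∑ i, ∑ j, T i j k * α i * β j =
      ((fun s => (Matrix.of u *ᵥ α) s * (Matrix.of v *ᵥ β) s) ᵥ* Matrix.of w) k := by
  subst hT
  simp only [vecMul, mulVec, dotProduct, of_apply, Finset.sum_mul,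
    Finset.mul_sum]
  rw [Finset.sum_congr rfl fun i _ => Finset.sum_comm, Finset.sum_comm]
  refine Finset.sum_congr rfl fun s _ => Finset.sum_comm.trans <|
    Finset.sum_congr rfl fun j _ => Finset.sum_congr rfl fun i _ => by ring

lemma hatSigmaAB_subset_iUnion [Fintype ι₁] [Fintype ι₂]
    (hT : T = fun i j k => ∑ s, u s i * v s j * w s k)
    (hw : Function.Injective (Matrix.of w).vecMul) :
    hatSigmaAB T ⊆ ⋃ J : {J : Set (ρ ⊕ ρ) // ∀ s, Sum.inl s ∈ J ∨ Sum.inr s ∈ J},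
      {x | ∀ c ∈ J.1, (Matrix.fromBlocks (Matrix.of u) 0 0 (Matrix.of v) *ᵥ x) c = 0} := by
  intro x hx
  set y := Matrix.fromBlocks (Matrix.of u) 0 0 (Matrix.of v) *ᵥ x
  have hy : (fun s => y (Sum.inl s) * y (Sum.inr s)) = 0 := hw <| by
    funext k
    have := sum_mul_mul_of_eq_sum hT (x ∘ Sum.inl) (x ∘ Sum.inr) k
    simp only [Function.comp_apply] at this
    simpa [y, fromBlocks_mulVec, ← this] using hx k
  exact Set.mem_iUnion.2 ⟨⟨{c | y c = 0}, fun s => mul_eq_zero.1 (congrFun hy s)⟩, fun c hc => hc⟩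

lemma exists_eq_sum_fin_of_eq_sum (hT : T = fun i j k => ∑ s, u s i * v s j * w s k) :
    ∃ (u' : Fin (Fintype.card ρ) → ι₁ → ℂ) (v' : Fin (Fintype.card ρ) → ι₂ → ℂ)
      (w' : Fin (Fintype.card ρ) → ι₃ → ℂ), T = fun i j k => ∑ s, u' s i * v' s j * w' s k := by
  let e := Fintype.equivFin ρ
  refine ⟨u ∘ e.symm, v ∘ e.symm, w ∘ e.symm, ?_⟩
  subst hT
  funext i j k
  exact (e.symm.sum_comp _).symm

end Decomposition

lemma card_compl_le_of_forall_inl_or_inr {ρ : Type} [Finite ρ] {J : Set (ρ ⊕ ρ)}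
    (hJ : ∀ s, Sum.inl s ∈ J ∨ Sum.inr s ∈ J) : Nat.card ↥Jᶜ ≤ Nat.card ρ := by
  refine Nat.card_le_card_of_injective (fun c => Sum.elim id id c.1) ?_
  rintro ⟨c₁ | c₁, h₁⟩ ⟨c₂ | c₂, h₂⟩ (rfl : c₁ = c₂)
  · rfl
  · exact ((hJ c₁).resolve_left h₁ |> h₂).elim
  · exact ((hJ c₁).resolve_left h₂ |> h₁).elim
  · rfl

lemma affineDim_hatSigmaAB_le {ι : Type} [Fintype ι] [DecidableEq ι] {T : ι → ι → ι → ℂ}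
    {u v w : ι → ι → ℂ} (hT : T = fun i j k => ∑ s, u s i * v s j * w s k)
    (hu : IsUnit (Matrix.of u)) (hv : IsUnit (Matrix.of v)) (hw : IsUnit (Matrix.of w)) :
    affineDim (hatSigmaAB T) ≤ Fintype.card ι := by
  set G := Matrix.fromBlocks (Matrix.of u) 0 0 (Matrix.of v)
  have hG : IsUnit G := isUnit_fromBlocks_zero₂₁.2 ⟨hu, hv⟩
  calc affineDim (hatSigmaAB T)
      ≤ affineDim (⋃ J : {J : Set (ι ⊕ ι) // ∀ s, Sum.inl s ∈ J ∨ Sum.inr s ∈ J},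
          {x | ∀ c ∈ J.1, (G *ᵥ x) c = 0}) :=
        affineDim_mono (hatSigmaAB_subset_iUnion hT (vecMul_injective_iff_isUnit.2 hw))
    _ ≤ ⨆ J : {J : Set (ι ⊕ ι) // ∀ s, Sum.inl s ∈ J ∨ Sum.inr s ∈ J},
          affineDim {x | ∀ c ∈ J.1, (G *ᵥ x) c = 0} :=
        affineDim_iUnion_le _
    _ ≤ Fintype.card ι := iSup_le fun J => (affineDim_setOf_mulVec_eq_zero_le hG J.1).trans <| by
        rw [← Nat.card_eq_fintype_card]
        exact_mod_cast card_compl_le_of_forall_inl_or_inr J.2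

lemma exists_eq_sum_tensorRank {ι₁ ι₂ ι₃ : Type} [Fintype ι₁] [Fintype ι₂]
    (T : ι₁ → ι₂ → ι₃ → ℂ) :
    ∃ (u : Fin (tensorRank T) → ι₁ → ℂ) (v : Fin (tensorRank T) → ι₂ → ℂ)
      (w : Fin (tensorRank T) → ι₃ → ℂ), T = fun i j k => ∑ s, u s i * v s j * w s k := by
  classical
  refine Nat.sInf_mem (s := {r | ∃ (u : Fin r → ι₁ → ℂ) (v : Fin r → ι₂ → ℂ)
    (w : Fin r → ι₃ → ℂ), T = fun i j k => ∑ s, u s i * v s j * w s k})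
    ⟨_, exists_eq_sum_fin_of_eq_sum (ρ := ι₁ × ι₂)
    (u := fun p i => if i = p.1 then 1 else 0) (v := fun p j => if j = p.2 then 1 else 0)
    (w := fun p k => T p.1 p.2 k) ?_⟩
  funext i j k
  simp [Fintype.sum_prod_type, ite_mul]

lemma Concise.card_le_tensorRank {ι₁ ι₂ ι₃ : Type} [Fintype ι₁] [Fintype ι₂] [Fintype ι₃]
    {T : ι₁ → ι₂ → ι₃ → ℂ} (hc : Concise T) : Fintype.card ι₁ ≤ tensorRank T := by
  obtain ⟨u, v, w, hT⟩ := exists_eq_sum_tensorRank T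
  simpa using card_le_card_of_injective_mulVec (hc.injective_mulVec_of_eq_sum hT).1

/-- A concise tensor in `ℂ^m ⊗ ℂ^m ⊗ ℂ^m` with degenerate geometric
rank (`GR(T) < m`) has tensor rank greater than `m`. -/
theorem stmt_7 (m : ℕ) (T : Fin m → Fin m → Fin m → ℂ)
    (hT : Concise T) (hGR : geomRank T < m) :
    m < tensorRank T := by
  by_contra! hle
  have hm : m ≤ tensorRank T := by simpa using hT.card_le_tensorRank
  obtain ⟨u, v, w, hdec⟩ := exists_eq_sum_tensorRank T
  generalize tensorRank T = r at *
  obtain rfl : r = m := le_antisymm hle hm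
  obtain ⟨hu, hv, hw⟩ := hT.injective_mulVec_of_eq_sum hdec
  have hdim := affineDim_hatSigmaAB_le hdec (mulVec_injective_iff_isUnit.1 hu)
    (mulVec_injective_iff_isUnit.1 hv) (mulVec_injective_iff_isUnit.1 hw)
  have := affineDimNat_le_of_affineDim_le (by simpa using hdim)
  simp only [geomRank, Fintype.card_fin] at hGR
  omega
end

section
/- Let b, c, q be positive integers and r ≥ 0, and let M be a b×c matrix whose entries are homogeneous linear forms in ℂ[x_1,…,x_q]. Suppose there exists a nonzero homogeneous polynomial S ∈ ℂ[x_1,…,x_q] of degree r+1 that is not divisible by any polynomial of degree 1, such that every (r+1)×(r+1) minor of M is a scalar multiple of S. Then every matrix in the linear space E = {M(x) : x ∈ ℂ^q} has rank at most r+1, i.e. every (r+2)×(r+2) minor of M is identically zero. -/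
open scoped BigOperators

/-! Let `N` be an `(r+2)`-square submatrix of `M`. Its cofactors are `(r+1)`-minors, hence scalar
multiples of `S`: `adj N = S • B` with `B` a constant matrix. From `N * adj N = det N • 1` and
`S ≠ 0` we get `N * B = L • 1` and `det N = S * L`, where `L` is a linear form. Taking
determinants, `L * S * det B = L ^ (r+2)`; if `L ≠ 0` then `S * det B = L ^ (r+1)` forces
`det B ≠ 0` and `L ∣ S`, which is excluded. So `L = 0` and `det N = 0`. -/

open Matrix Module Submodule

theorem exists_injective_linearIndependent_comp_of_le_finrank_span {K V ι : Type*} [Field K]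
    [AddCommGroup V] [Module K V] [Finite ι] (v : ι → V) {k : ℕ}
    (h : k ≤ finrank K (span K (Set.range v))) :
    ∃ f : Fin k → ι, Function.Injective f ∧ LinearIndependent K (v ∘ f) := by
  obtain ⟨κ, a, ha, hspan, hli⟩ := exists_linearIndependent' K v
  have : Finite κ := Finite.of_injective a ha
  have : Fintype κ := Fintype.ofFinite κ
  rw [← hspan, finrank_span_eq_card hli] at h
  obtain ⟨e⟩ : Nonempty (Fin k ↪ κ) := Function.Embedding.nonempty_of_card_le (by simpa using h)
  exact ⟨a ∘ e, ha.comp e.injective, hli.comp e e.injective⟩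

theorem Matrix.exists_det_submatrix_ne_zero_of_le_rank {K m n : Type*} [Field K] [Fintype m]
    [Fintype n] (B : Matrix m n K) {k : ℕ} (h : k ≤ B.rank) :
    ∃ (rows : Fin k → m) (cols : Fin k → n), Function.Injective rows ∧
      Function.Injective cols ∧ (B.submatrix rows cols).det ≠ 0 := by
  rw [rank_eq_finrank_span_cols] at h
  obtain ⟨cols, hcols, hli_cols⟩ := exists_injective_linearIndependent_comp_of_le_finrank_span _ h
  have hrank : (B.submatrix id cols).rank = k := by
    rw [← rank_transpose, transpose_submatrix]
    exact (hli_cols.rank_matrix (M := Bᵀ.submatrix cols id)).trans (Fintype.card_fin k)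
  rw [rank_eq_finrank_span_row] at hrank
  obtain ⟨rows, hrows, hli_rows⟩ :=
    exists_injective_linearIndependent_comp_of_le_finrank_span _ hrank.ge
  refine ⟨rows, cols, hrows, hcols, ?_⟩
  exact ((isUnit_iff_isUnit_det _).mp (linearIndependent_rows_iff_isUnit.mp hli_rows)).ne_zero

theorem Matrix.exists_mul_eq_smul_one_of_adjugate_eq_smul {R n : Type*} [CommRing R] [IsDomain R]
    [Fintype n] [DecidableEq n] [Nonempty n] {N B : Matrix n n R} {S : R} (hS : S ≠ 0)
    (h : N.adjugate = S • B) : ∃ L, N.det = S * L ∧ N * B = L • 1 := by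
  have hNB : S • (N * B) = N.det • 1 := by rw [← mul_adjugate, h, Matrix.mul_smul]
  let i : n := Classical.arbitrary n
  have hdet : N.det = S * (N * B) i i := by
    simpa using (congr_fun₂ hNB i i).symm
  refine ⟨(N * B) i i, hdet, smul_right_injective (Matrix n n R) hS ?_⟩
  change S • (N * B) = S • ((N * B) i i • 1)
  rw [hNB, hdet, smul_smul]

theorem Matrix.exists_adjugate_eq_smul_map_of_det_submatrix_succAbove {K R : Type*} [CommRing K]
    [CommRing R] (f : K →+* R) {k : ℕ} (N : Matrix (Fin (k + 1)) (Fin (k + 1)) R) (S : R)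
    (h : ∀ i j : Fin (k + 1), ∃ t, (N.submatrix i.succAbove j.succAbove).det = f t * S) :
    ∃ B : Matrix (Fin (k + 1)) (Fin (k + 1)) K, N.adjugate = S • B.map f := by
  choose t ht using h
  refine ⟨of fun i j => (-1) ^ ((i : ℕ) + j) * t j i, ?_⟩
  ext i j
  rw [adjugate_fin_succ_eq_det_submatrix, ht]
  simp only [smul_apply, map_apply, of_apply, map_mul, map_pow, map_neg, map_one, smul_eq_mul]
  ring

theorem dvd_of_mul_mul_eq_pow {R : Type*} [CommMonoidWithZero R] [IsCancelMulZero R]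
    {L S d : R} {m : ℕ} (hd : IsUnit d ∨ d = 0) (hL : L ≠ 0) (h : L * S * d = L ^ (m + 2)) :
    L ∣ S := by
  have hSd : S * d = L ^ (m + 1) := mul_left_cancel₀ hL (by rw [← mul_assoc, h, pow_succ' L])
  rcases hd with hd | rfl
  · rw [← hd.dvd_mul_right, hSd]
    exact dvd_pow_self L m.succ_ne_zero
  · rw [mul_zero, eq_comm, pow_eq_zero_iff m.succ_ne_zero] at hSd
    exact absurd hSd hL

namespace MvPolynomial

theorem isHomogeneous_mul_map_C_apply {σ K n : Type*} [CommSemiring K] [Fintype n]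
    {N : Matrix n n (MvPolynomial σ K)} {d : ℕ} (hN : ∀ i j, (N i j).IsHomogeneous d)
    (B : Matrix n n K) (i j : n) :
    ((N * B.map C : Matrix n n (MvPolynomial σ K)) i j).IsHomogeneous d :=
  IsHomogeneous.sum _ _ _ fun l _ => by simpa using (hN i l).mul (isHomogeneous_C σ (B l j))

theorem det_eq_zero_of_det_submatrix_succAbove_eq_C_mul {σ K : Type*} [Field K] {k : ℕ}
    (N : Matrix (Fin (k + 2)) (Fin (k + 2)) (MvPolynomial σ K))
    (hlin : ∀ i j, (N i j).IsHomogeneous 1) {S : MvPolynomial σ K} (hS0 : S ≠ 0)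
    (hSnolin : ∀ L : MvPolynomial σ K, L.totalDegree = 1 → ¬ L ∣ S)
    (hminors : ∀ i j : Fin (k + 2), ∃ t, (N.submatrix i.succAbove j.succAbove).det = C t * S) :
    N.det = 0 := by
  obtain ⟨B, hB⟩ := exists_adjugate_eq_smul_map_of_det_submatrix_succAbove C N S hminors
  obtain ⟨L, hdet, hNB⟩ := exists_mul_eq_smul_one_of_adjugate_eq_smul hS0 hB
  have hLhom : L.IsHomogeneous 1 := by
    simpa [hNB] using isHomogeneous_mul_map_C_apply hlin B 0 0
  have hpow : L * S * C B.det = L ^ (k + 2) := by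
    have := congr_arg det hNB
    rwa [det_mul, det_smul, det_one, mul_one, Fintype.card_fin, ← RingHom.mapMatrix_apply,
      ← RingHom.map_det, hdet, mul_comm S] at this
  have hCdet : IsUnit (C B.det : MvPolynomial σ K) ∨ (C B.det : MvPolynomial σ K) = 0 := by
    rcases eq_or_ne B.det 0 with h | h
    · exact .inr (by rw [h, map_zero])
    · exact .inl (h.isUnit.map C)
  rw [hdet]
  by_contra hSL
  have hL : L ≠ 0 := right_ne_zero_of_mul hSL
  exact hSnolin L (hLhom.totalDegree hL) (dvd_of_mul_mul_eq_pow hCdet hL hpow)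

end MvPolynomial

theorem stmt_9_general (b c q : ℕ) (r : ℕ)
    (M : Matrix (Fin b) (Fin c) (MvPolynomial (Fin q) ℂ))
    (hlin : ∀ i j, (M i j).IsHomogeneous 1)
    (S : MvPolynomial (Fin q) ℂ) (hS0 : S ≠ 0)
    (hSnolin : ∀ L : MvPolynomial (Fin q) ℂ, L.totalDegree = 1 → ¬ L ∣ S)
    (hminors : ∀ (rows : Fin (r + 1) → Fin b) (cols : Fin (r + 1) → Fin c),
      Function.Injective rows → Function.Injective cols →
      ∃ t : ℂ, (M.submatrix rows cols).det = MvPolynomial.C t * S) :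
    (∀ x : Fin q → ℂ,
      (Matrix.of fun i j => MvPolynomial.eval x (M i j)).rank ≤ r + 1) ∧
    (∀ (rows : Fin (r + 2) → Fin b) (cols : Fin (r + 2) → Fin c),
      Function.Injective rows → Function.Injective cols →
      (M.submatrix rows cols).det = 0) := by
  have hdet : ∀ (rows : Fin (r + 2) → Fin b) (cols : Fin (r + 2) → Fin c),
      Function.Injective rows → Function.Injective cols → (M.submatrix rows cols).det = 0 :=
    fun rows cols hrows hcols =>
      MvPolynomial.det_eq_zero_of_det_submatrix_succAbove_eq_C_mul _ (fun _ _ => hlin _ _) hS0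
        hSnolin fun i j => by
          simpa only [submatrix_submatrix] using hminors _ _
            (hrows.comp Fin.succAbove_right_injective) (hcols.comp Fin.succAbove_right_injective)
  refine ⟨fun x => ?_, hdet⟩
  by_contra! hrank
  obtain ⟨rows, cols, hrows, hcols, hne⟩ := exists_det_submatrix_ne_zero_of_le_rank _ hrank
  apply hne
  change ((MvPolynomial.eval x).mapMatrix (M.submatrix rows cols)).det = 0
  rw [← RingHom.map_det, hdet rows cols hrows hcols, map_zero]

/-- If all `(r+1) × (r+1)` minors of a `b × c` matrix of linear forms
are scalar multiples of a fixed degree-`(r+1)` polynomial `S` with no linear factor, then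
the matrix has rank at most `r+1` at every point, i.e. all `(r+2) × (r+2)` minors vanish
identically. -/
theorem stmt_9 (b c q : ℕ) (hb : 0 < b) (hc : 0 < c) (hq : 0 < q) (r : ℕ)
    (M : Matrix (Fin b) (Fin c) (MvPolynomial (Fin q) ℂ))
    (hlin : ∀ i j, (M i j).IsHomogeneous 1)
    (S : MvPolynomial (Fin q) ℂ) (hS0 : S ≠ 0) (hShom : S.IsHomogeneous (r + 1))
    (hSnolin : ∀ L : MvPolynomial (Fin q) ℂ, L.totalDegree = 1 → ¬ L ∣ S)
    (hminors : ∀ (rows : Fin (r + 1) → Fin b) (cols : Fin (r + 1) → Fin c),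
      Function.Injective rows → Function.Injective cols →
      ∃ t : ℂ, (M.submatrix rows cols).det = MvPolynomial.C t * S) :
    (∀ x : Fin q → ℂ,
      (Matrix.of fun i j => MvPolynomial.eval x (M i j)).rank ≤ r + 1) ∧
    (∀ (rows : Fin (r + 2) → Fin b) (cols : Fin (r + 2) → Fin c),
      Function.Injective rows → Function.Injective cols →
      (M.submatrix rows cols).det = 0) :=
  stmt_9_general b c q r M hlin S hS0 hSnolin hminors
end
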